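/- For every s ∈ (0,1) and all x, y ∈ ℝ^N one has K_s(x,y) ≤ e^{|x|²/4} e^{|y|²/4} K̃_s(|x-y|), where K̃_s(r) := ∫_0^∞ exp( -e^t r² / (2(e^{2t}-1)) ) t^{-(s/2+1)} (1-e^{-2t})^{-N/2} dt. -/

import Mathlib

/-!
Writing `a = e^{-t}`, polarization splits the Mehler exponent as
`a(|x|² + |y|²) / (2(1 + a)) - e^t |x - y|² / (2(e^{2t} - 1))`.
The first summand lies in `[0, (|x|² + |y|²)/4]` because `a/(1 + a) ≤ 1/2`, so the
integrand of `K_s` is squeezed between the integrand `g` of `K̃_s(|x - y|)` and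
`e^{|x|²/4} e^{|y|²/4} g`. Integrating gives the bound; the lower bound `g ≤` integrand
covers divergent integrals, which Lean evaluates to `0`.
-/

open Real MeasureTheory
open scoped RealInnerProductSpace

/-- The Mehler kernel of the Ornstein-Uhlenbeck semigroup on ℝ^N. -/
noncomputable def mehler (N : ℕ) (t : ℝ) (x y : EuclideanSpace ℝ (Fin N)) : ℝ :=
  (1 - exp (-2 * t)) ^ (-(N:ℝ)/2) *
    exp (-(exp (-2 * t) * ‖x‖^2 - 2 * exp (-t) * ⟪x, y⟫ + exp (-2 * t) * ‖y‖^2) /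
      (2 * (1 - exp (-2 * t))))

/-- The fractional Gaussian kernel given by Bochner subordination. -/
noncomputable def fracKernel (N : ℕ) (s : ℝ) (x y : EuclideanSpace ℝ (Fin N)) : ℝ :=
  ∫ t in Set.Ioi (0:ℝ), mehler N t x y / t ^ (s/2 + 1)

/-- The radial majorant kernel K̃_s. -/
noncomputable def radKernel (N : ℕ) (s r : ℝ) : ℝ :=
  ∫ t in Set.Ioi (0:ℝ),
    exp (-(exp t * r^2) / (2 * (exp (2 * t) - 1))) /
      (t ^ (s/2 + 1) * (1 - exp (-2 * t)) ^ ((N:ℝ)/2))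

theorem integral_le_const_mul_integral_of_le_of_le {α : Type*} [MeasurableSpace α]
    {μ : Measure α} {f g : α → ℝ} (C : ℝ)
    (hf : AEStronglyMeasurable f μ) (hg : AEStronglyMeasurable g μ)
    (hg_nonneg : 0 ≤ᵐ[μ] g) (hgf : g ≤ᵐ[μ] f) (hfg : ∀ᵐ a ∂μ, f a ≤ C * g a) :
    ∫ a, f a ∂μ ≤ C * ∫ a, g a ∂μ := by
  by_cases hgi : Integrable g μ
  · have hfi : Integrable f μ := by
      refine (hgi.const_mul C).mono' hf ?_
      filter_upwards [hg_nonneg, hgf, hfg] with a h0 h1 h2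
      rw [Real.norm_eq_abs, abs_of_nonneg (h0.trans h1)]
      exact h2
    rw [← integral_const_mul]
    exact integral_mono_ae hfi (hgi.const_mul C) hfg
  · have hfi : ¬ Integrable f μ := fun hfi => hgi <| hfi.mono' hg <| by
      filter_upwards [hg_nonneg, hgf] with a h0 h1
      rwa [Real.norm_eq_abs, abs_of_nonneg h0]
    rw [integral_undef hfi, integral_undef hgi, mul_zero]

theorem mul_div_two_mul_one_add_le {a u : ℝ} (ha₀ : 0 ≤ a) (ha₁ : a ≤ 1) (hu : 0 ≤ u) :
    a * u / (2 * (1 + a)) ≤ u / 4 := by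
  rw [div_le_div_iff₀ (by positivity) (by norm_num)]
  nlinarith [mul_nonneg (sub_nonneg.2 ha₁) hu]

theorem mehler_exponent_eq {E : Type*} [NormedAddCommGroup E] [InnerProductSpace ℝ E]
    {a : ℝ} (ha : a ≠ 0) (ha₁ : a ^ 2 ≠ 1) (x y : E) :
    -(a ^ 2 * ‖x‖ ^ 2 - 2 * a * ⟪x, y⟫ + a ^ 2 * ‖y‖ ^ 2) / (2 * (1 - a ^ 2))
      = a * (‖x‖ ^ 2 + ‖y‖ ^ 2) / (2 * (1 + a))
        + -(a⁻¹ * ‖x - y‖ ^ 2) / (2 * ((a ^ 2)⁻¹ - 1)) := by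
  have h₁ : 1 - a ^ 2 ≠ 0 := sub_ne_zero.2 (Ne.symm ha₁)
  have h₂ : 1 + a ≠ 0 := fun h => h₁ (by linear_combination (1 - a) * h)
  have h₃ : (a ^ 2)⁻¹ - 1 ≠ 0 := by
    rw [sub_ne_zero, Ne, inv_eq_one]
    exact ha₁
  rw [norm_sub_sq_real]
  field_simp
  ring

noncomputable def radIntegrand (N : ℕ) (s r t : ℝ) : ℝ :=
  exp (-(exp t * r ^ 2) / (2 * (exp (2 * t) - 1))) /
    (t ^ (s / 2 + 1) * (1 - exp (-2 * t)) ^ ((N : ℝ) / 2))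

theorem radKernel_eq_integral_radIntegrand (N : ℕ) (s r : ℝ) :
    radKernel N s r = ∫ t in Set.Ioi (0 : ℝ), radIntegrand N s r t := rfl

theorem measurable_radIntegrand (N : ℕ) (s r : ℝ) : Measurable (radIntegrand N s r) := by
  unfold radIntegrand
  fun_prop

theorem one_sub_exp_neg_two_mul_pos {t : ℝ} (ht : 0 < t) : 0 < 1 - exp (-2 * t) := by
  rw [sub_pos, exp_lt_one_iff]
  linarith

theorem radIntegrand_pos (N : ℕ) (s r : ℝ) {t : ℝ} (ht : 0 < t) : 0 < radIntegrand N s r t := by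
  have := one_sub_exp_neg_two_mul_pos ht
  unfold radIntegrand
  positivity

theorem measurable_mehler_div_rpow (N : ℕ) (s : ℝ) (x y : EuclideanSpace ℝ (Fin N)) :
    Measurable (fun t : ℝ => mehler N t x y / t ^ (s / 2 + 1)) := by
  unfold mehler
  fun_prop

theorem mehler_div_rpow_eq (N : ℕ) (s : ℝ) (x y : EuclideanSpace ℝ (Fin N)) {t : ℝ}
    (ht : 0 < t) :
    mehler N t x y / t ^ (s / 2 + 1)
      = exp (exp (-t) * (‖x‖ ^ 2 + ‖y‖ ^ 2) / (2 * (1 + exp (-t)))) *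
          radIntegrand N s ‖x - y‖ t := by
  set a := exp (-t) with ha
  have ha₁ : a < 1 := exp_lt_one_iff.2 (neg_lt_zero.2 ht)
  have h₁ : exp (-2 * t) = a ^ 2 := by rw [ha, ← exp_nat_mul]; ring_nf
  have h₂ : exp t = a⁻¹ := by rw [ha, exp_neg, inv_inv]
  have h₃ : exp (2 * t) = (a ^ 2)⁻¹ := by rw [← h₁, ← exp_neg]; ring_nf
  have hpos := one_sub_exp_neg_two_mul_pos ht
  rw [mehler, radIntegrand, neg_div, rpow_neg hpos.le, h₁, h₂, h₃, ← ha,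
    mehler_exponent_eq (exp_pos _).ne' (by nlinarith [exp_pos (-t)]), exp_add]
  ring

theorem radIntegrand_le_mehler_div_rpow (N : ℕ) (s : ℝ) (x y : EuclideanSpace ℝ (Fin N))
    {t : ℝ} (ht : 0 < t) :
    radIntegrand N s ‖x - y‖ t ≤ mehler N t x y / t ^ (s / 2 + 1) := by
  rw [mehler_div_rpow_eq N s x y ht]
  exact le_mul_of_one_le_left (radIntegrand_pos N s _ ht).le (one_le_exp (by positivity))

theorem mehler_div_rpow_le (N : ℕ) (s : ℝ) (x y : EuclideanSpace ℝ (Fin N)) {t : ℝ}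
    (ht : 0 < t) :
    mehler N t x y / t ^ (s / 2 + 1)
      ≤ exp (‖x‖ ^ 2 / 4) * exp (‖y‖ ^ 2 / 4) * radIntegrand N s ‖x - y‖ t := by
  rw [mehler_div_rpow_eq N s x y ht, ← exp_add, ← add_div]
  have ha₁ : exp (-t) ≤ 1 := exp_le_one_iff.2 (by linarith)
  exact mul_le_mul_of_nonneg_right
    (exp_le_exp.2 (mul_div_two_mul_one_add_le (exp_pos _).le ha₁ (by positivity)))
    (radIntegrand_pos N s _ ht).le

theorem fracKernel_upper_bound_general (N : ℕ) (s : ℝ)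
    (x y : EuclideanSpace ℝ (Fin N)) :
    fracKernel N s x y ≤ exp (‖x‖^2 / 4) * exp (‖y‖^2 / 4) * radKernel N s ‖x - y‖ := by
  have hIoi : ∀ᵐ t ∂(volume.restrict (Set.Ioi (0 : ℝ))), 0 < t :=
    ae_restrict_mem measurableSet_Ioi
  rw [radKernel_eq_integral_radIntegrand]
  refine integral_le_const_mul_integral_of_le_of_le _
    (measurable_mehler_div_rpow N s x y).aestronglyMeasurable
    (measurable_radIntegrand N s _).aestronglyMeasurable ?_ ?_ ?_
  · filter_upwards [hIoi] with t ht using (radIntegrand_pos N s _ ht).le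
  · filter_upwards [hIoi] with t ht using radIntegrand_le_mehler_div_rpow N s x y ht
  · filter_upwards [hIoi] with t ht using mehler_div_rpow_le N s x y ht

theorem fracKernel_upper_bound (N : ℕ) (s : ℝ) (hs : s ∈ Set.Ioo (0:ℝ) 1)
    (x y : EuclideanSpace ℝ (Fin N)) :
    fracKernel N s x y ≤ exp (‖x‖^2 / 4) * exp (‖y‖^2 / 4) * radKernel N s ‖x - y‖ :=
  fracKernel_upper_bound_general N s x y
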